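/- arXiv:2110.02499 — 2 statements merged into one kernel-verified Lean document; each statement's English description precedes it below -/
import Mathlib

section
/- For every bounded linear operator A on a complex Hilbert space, w²(A) ≥ max{β₁, β₂}, where β₁ = (1/2)c²(Re(A) + Im(A)) + (1/2)‖Re(A) − Im(A)‖² and β₂ = (1/2)c²(Re(A) − Im(A)) + (1/2)‖Re(A) + Im(A)‖². -/
open scoped InnerProductSpace
open ContinuousLinearMap

/-- The numerical radius of a bounded linear operator. -/
noncomputable def numRadius {H : Type*} [NormedAddCommGroup H] [InnerProductSpace ℂ H]
    (A : H →L[ℂ] H) : ℝ :=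
  sSup {r : ℝ | ∃ x : H, ‖x‖ = 1 ∧ r = ‖⟪A x, x⟫_ℂ‖}

/-- The Crawford number of a bounded linear operator. -/
noncomputable def crawford {H : Type*} [NormedAddCommGroup H] [InnerProductSpace ℂ H]
    (A : H →L[ℂ] H) : ℝ :=
  sInf {r : ℝ | ∃ x : H, ‖x‖ = 1 ∧ r = ‖⟪A x, x⟫_ℂ‖}

/-- The real part of a bounded linear operator. -/
noncomputable def reP {H : Type*} [NormedAddCommGroup H] [InnerProductSpace ℂ H]
    [CompleteSpace H] (A : H →L[ℂ] H) : H →L[ℂ] H :=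
  ((2 : ℂ)⁻¹) • (A + adjoint A)

/-- The imaginary part of a bounded linear operator. -/
noncomputable def imP {H : Type*} [NormedAddCommGroup H] [InnerProductSpace ℂ H]
    [CompleteSpace H] (A : H →L[ℂ] H) : H →L[ℂ] H :=
  ((2 * Complex.I)⁻¹) • (A - adjoint A)

/-!
For a unit vector `x` the numbers `⟪Re(A) x, x⟫ = re ⟪A x, x⟫` and `⟪Im(A) x, x⟫ = -im ⟪A x, x⟫`
are real, so `2 |⟪A x, x⟫|² = |⟪(Re A + Im A) x, x⟫|² + |⟪(Re A - Im A) x, x⟫|²`. Hence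
`|⟪(Re A - Im A) x, x⟫|² ≤ 2 w²(A) - c²(Re A + Im A)` for every unit `x`, and the left side has
supremum `‖Re A - Im A‖²` because `Re A - Im A` is self-adjoint. Exchanging the roles of
`Re A + Im A` and `Re A - Im A` gives the other bound.
-/

namespace ContinuousLinearMap

variable {𝕜 E : Type*} [RCLike 𝕜] [NormedAddCommGroup E] [InnerProductSpace 𝕜 E]

theorem opNorm_le_of_isSymmetric_of_inner_self_le {T : E →L[𝕜] E}
    (hT : (T : E →ₗ[𝕜] E).IsSymmetric) {M : ℝ} (hM : 0 ≤ M)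
    (h : ∀ x : E, ‖x‖ = 1 → ‖⟪T x, x⟫_𝕜‖ ≤ M) : ‖T‖ ≤ M := by
  rw [T.norm_eq_iSup_rayleighQuotient hT]
  refine ciSup_le fun x => ?_
  rcases eq_or_ne x 0 with rfl | hx
  · simpa using hM
  set y := ((‖x‖⁻¹ : ℝ) : 𝕜) • x
  have hy : ‖y‖ = 1 := by simp [y, norm_smul, hx]
  rw [← T.rayleigh_smul x (c := ((‖x‖⁻¹ : ℝ) : 𝕜)) (by simp [hx])]
  calc |T.rayleighQuotient y| = |RCLike.re ⟪T y, y⟫_𝕜| := by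
        simp [rayleighQuotient, reApplyInnerSelf_apply, hy]
    _ ≤ ‖⟪T y, y⟫_𝕜‖ := RCLike.abs_re_le_norm _
    _ ≤ M := h y hy

end ContinuousLinearMap

section NumericalRange

variable {H : Type*} [NormedAddCommGroup H] [InnerProductSpace ℂ H]

theorem norm_inner_self_le_numRadius (A : H →L[ℂ] H) {x : H} (hx : ‖x‖ = 1) :
    ‖⟪A x, x⟫_ℂ‖ ≤ numRadius A := by
  refine le_csSup ⟨‖A‖, ?_⟩ ⟨x, hx, rfl⟩
  rintro r ⟨y, hy, rfl⟩
  calc ‖⟪A y, y⟫_ℂ‖ ≤ ‖A y‖ * ‖y‖ := norm_inner_le_norm _ _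
    _ ≤ ‖A‖ := by simpa [hy] using A.le_opNorm y

theorem crawford_le_norm_inner_self (A : H →L[ℂ] H) {x : H} (hx : ‖x‖ = 1) :
    crawford A ≤ ‖⟪A x, x⟫_ℂ‖ :=
  csInf_le ⟨0, by rintro r ⟨y, -, rfl⟩; positivity⟩ ⟨x, hx, rfl⟩

theorem crawford_nonneg (A : H →L[ℂ] H) : 0 ≤ crawford A :=
  Real.sInf_nonneg (by rintro r ⟨y, -, rfl⟩; positivity)

theorem half_crawford_sq_add_half_norm_sq_le_numRadius_sq [Nontrivial H] {A B C : H →L[ℂ] H}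
    (hC : (C : H →ₗ[ℂ] H).IsSymmetric)
    (hABC : ∀ x : H, ‖⟪A x, x⟫_ℂ‖ ^ 2 = 1 / 2 * ‖⟪B x, x⟫_ℂ‖ ^ 2 + 1 / 2 * ‖⟪C x, x⟫_ℂ‖ ^ 2) :
    1 / 2 * crawford B ^ 2 + 1 / 2 * ‖C‖ ^ 2 ≤ numRadius A ^ 2 := by
  set K := 2 * numRadius A ^ 2 - crawford B ^ 2
  have hCK : ∀ x : H, ‖x‖ = 1 → ‖⟪C x, x⟫_ℂ‖ ^ 2 ≤ K := fun x hx => by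
    have hA : ‖⟪A x, x⟫_ℂ‖ ^ 2 ≤ numRadius A ^ 2 := by
      gcongr; exact norm_inner_self_le_numRadius A hx
    have hB : crawford B ^ 2 ≤ ‖⟪B x, x⟫_ℂ‖ ^ 2 := by
      have := crawford_nonneg B
      gcongr; exact crawford_le_norm_inner_self B hx
    linarith [hABC x]
  obtain ⟨u, hu⟩ := exists_norm_eq H zero_le_one
  have hK : 0 ≤ K := (sq_nonneg _).trans (hCK u hu)
  have hC_le : ‖C‖ ≤ √K := opNorm_le_of_isSymmetric_of_inner_self_le hC (Real.sqrt_nonneg K)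
    fun x hx => Real.le_sqrt_of_sq_le (hCK x hx)
  have : ‖C‖ ^ 2 ≤ K := (pow_le_pow_left₀ (norm_nonneg C) hC_le 2).trans (Real.sq_sqrt hK).le
  linarith

end NumericalRange

section CartesianDecomposition

variable {H : Type*} [NormedAddCommGroup H] [InnerProductSpace ℂ H] [CompleteSpace H]

theorem isSelfAdjoint_reP (A : H →L[ℂ] H) : IsSelfAdjoint (reP A) := by
  simp [reP, IsSelfAdjoint, ← star_eq_adjoint, star_smul, add_comm]

theorem isSelfAdjoint_imP (A : H →L[ℂ] H) : IsSelfAdjoint (imP A) := by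
  simp [imP, IsSelfAdjoint, ← star_eq_adjoint, star_smul]
  module

theorem inner_reP_apply_self (A : H →L[ℂ] H) (x : H) :
    ⟪reP A x, x⟫_ℂ = (⟪A x, x⟫_ℂ).re := by
  rw [reP, smul_apply, add_apply, inner_smul_left, inner_add_left, adjoint_inner_left,
    ← inner_conj_symm x (A x)]
  generalize ⟪A x, x⟫_ℂ = a
  simp [Complex.ext_iff]
  ring

theorem inner_imP_apply_self (A : H →L[ℂ] H) (x : H) :
    ⟪imP A x, x⟫_ℂ = -(⟪A x, x⟫_ℂ).im := by
  rw [imP, smul_apply, sub_apply, inner_smul_left, inner_sub_left, adjoint_inner_left,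
    ← inner_conj_symm x (A x)]
  generalize ⟪A x, x⟫_ℂ = a
  simp [Complex.ext_iff]
  ring

theorem norm_inner_self_sq_eq_reP_add_imP_reP_sub_imP (A : H →L[ℂ] H) (x : H) :
    ‖⟪A x, x⟫_ℂ‖ ^ 2 =
      1 / 2 * ‖⟪(reP A + imP A) x, x⟫_ℂ‖ ^ 2 + 1 / 2 * ‖⟪(reP A - imP A) x, x⟫_ℂ‖ ^ 2 := by
  rw [add_apply, sub_apply, inner_add_left, inner_sub_left, inner_reP_apply_self,
    inner_imP_apply_self]
  generalize ⟪A x, x⟫_ℂ = a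
  simp [Complex.sq_norm, Complex.normSq_apply]
  ring

end CartesianDecomposition

theorem stmt3 {H : Type*} [NormedAddCommGroup H] [InnerProductSpace ℂ H]
    [CompleteSpace H] [Nontrivial H] (A : H →L[ℂ] H) :
    max ((1/2 : ℝ) * crawford (reP A + imP A) ^ 2 + (1/2 : ℝ) * ‖reP A - imP A‖ ^ 2)
        ((1/2 : ℝ) * crawford (reP A - imP A) ^ 2 + (1/2 : ℝ) * ‖reP A + imP A‖ ^ 2) ≤
      numRadius A ^ 2 := by
  have hRe := isSelfAdjoint_reP A
  have hIm := isSelfAdjoint_imP A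
  have hid := norm_inner_self_sq_eq_reP_add_imP_reP_sub_imP A
  refine max_le ?_ ?_
  · exact half_crawford_sq_add_half_norm_sq_le_numRadius_sq (hRe.sub hIm).isSymmetric hid
  · exact half_crawford_sq_add_half_norm_sq_le_numRadius_sq (hRe.add hIm).isSymmetric
      fun x => by rw [hid x]; ring
end

section
/- For every bounded linear operator A on a complex Hilbert space, (1/4)[ w²(A²) + (1/4)‖(A*A)² + (AA*)²‖ + (1/2)w(A*A²A*) + w(A²)·‖A*A + AA*‖ ] ≤ ( (‖A‖² + w(A²))/2 )². -/
open scoped InnerProductSpace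
open ContinuousLinearMap

section Aux

variable {H : Type*} [NormedAddCommGroup H] [InnerProductSpace ℂ H] [Nontrivial H]

lemma numRadius_le_norm (A : H →L[ℂ] H) : numRadius A ≤ ‖A‖ := by
  obtain ⟨x₀, hx₀⟩ := exists_norm_eq H (zero_le_one (α := ℝ))
  refine csSup_le ⟨‖⟪A x₀, x₀⟫_ℂ‖, x₀, hx₀, rfl⟩ ?_
  rintro r ⟨x, hx, rfl⟩
  calc ‖⟪A x, x⟫_ℂ‖ ≤ ‖A x‖ * ‖x‖ := norm_inner_le_norm _ _
    _ ≤ (‖A‖ * ‖x‖) * ‖x‖ := by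
        gcongr
        exact A.le_opNorm x
    _ = ‖A‖ := by rw [hx]; ring

lemma numRadius_nonneg (A : H →L[ℂ] H) : 0 ≤ numRadius A := by
  obtain ⟨x₀, hx₀⟩ := exists_norm_eq H (zero_le_one (α := ℝ))
  have hbdd : BddAbove {r : ℝ | ∃ x : H, ‖x‖ = 1 ∧ r = ‖⟪A x, x⟫_ℂ‖} := by
    refine ⟨‖A‖, ?_⟩
    rintro r ⟨x, hx, rfl⟩
    calc ‖⟪A x, x⟫_ℂ‖ ≤ ‖A x‖ * ‖x‖ := norm_inner_le_norm _ _
      _ ≤ (‖A‖ * ‖x‖) * ‖x‖ := by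
          gcongr
          exact A.le_opNorm x
      _ = ‖A‖ := by rw [hx]; ring
  exact le_trans (norm_nonneg _) (le_csSup hbdd ⟨x₀, hx₀, rfl⟩)

end Aux

theorem stmt14 {H : Type*} [NormedAddCommGroup H] [InnerProductSpace ℂ H]
    [CompleteSpace H] [Nontrivial H] (A : H →L[ℂ] H) :
    (1/4 : ℝ) * (numRadius (A ^ 2) ^ 2 +
      (1/4 : ℝ) * ‖(adjoint A * A) ^ 2 + (A * adjoint A) ^ 2‖ +
      (1/2 : ℝ) * numRadius (adjoint A * A ^ 2 * adjoint A) +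
      numRadius (A ^ 2) * ‖adjoint A * A + A * adjoint A‖) ≤
    ((‖A‖ ^ 2 + numRadius (A ^ 2)) / 2) ^ 2 := by
  have hadj : ‖adjoint A‖ = ‖A‖ := (adjoint : (H →L[ℂ] H) ≃ₗᵢ⋆[ℂ] H →L[ℂ] H).norm_map A
  have h1 : ‖adjoint A * A‖ ≤ ‖A‖ ^ 2 := by
    calc ‖adjoint A * A‖ ≤ ‖adjoint A‖ * ‖A‖ := norm_mul_le _ _
      _ = ‖A‖ ^ 2 := by rw [hadj]; ring
  have h2 : ‖A * adjoint A‖ ≤ ‖A‖ ^ 2 := by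
    calc ‖A * adjoint A‖ ≤ ‖A‖ * ‖adjoint A‖ := norm_mul_le _ _
      _ = ‖A‖ ^ 2 := by rw [hadj]; ring
  have h3 : ‖adjoint A * A + A * adjoint A‖ ≤ 2 * ‖A‖ ^ 2 := by
    calc ‖adjoint A * A + A * adjoint A‖ ≤ ‖adjoint A * A‖ + ‖A * adjoint A‖ := norm_add_le _ _
      _ ≤ 2 * ‖A‖ ^ 2 := by linarith
  have h4 : ‖(adjoint A * A) ^ 2 + (A * adjoint A) ^ 2‖ ≤ 2 * ‖A‖ ^ 4 := by
    have e1 : ‖(adjoint A * A) ^ 2‖ ≤ ‖A‖ ^ 4 := by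
      calc ‖(adjoint A * A) ^ 2‖ = ‖(adjoint A * A) * (adjoint A * A)‖ := by rw [sq]
        _ ≤ ‖adjoint A * A‖ * ‖adjoint A * A‖ := norm_mul_le _ _
        _ ≤ (‖A‖ ^ 2) * (‖A‖ ^ 2) := by
            exact mul_le_mul h1 h1 (norm_nonneg _) (by positivity)
        _ = ‖A‖ ^ 4 := by ring
    have e2 : ‖(A * adjoint A) ^ 2‖ ≤ ‖A‖ ^ 4 := by
      calc ‖(A * adjoint A) ^ 2‖ = ‖(A * adjoint A) * (A * adjoint A)‖ := by rw [sq]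
        _ ≤ ‖A * adjoint A‖ * ‖A * adjoint A‖ := norm_mul_le _ _
        _ ≤ (‖A‖ ^ 2) * (‖A‖ ^ 2) := by
            exact mul_le_mul h2 h2 (norm_nonneg _) (by positivity)
        _ = ‖A‖ ^ 4 := by ring
    calc ‖(adjoint A * A) ^ 2 + (A * adjoint A) ^ 2‖
        ≤ ‖(adjoint A * A) ^ 2‖ + ‖(A * adjoint A) ^ 2‖ := norm_add_le _ _
      _ ≤ 2 * ‖A‖ ^ 4 := by linarith
  have h5 : numRadius (adjoint A * A ^ 2 * adjoint A) ≤ ‖A‖ ^ 4 := by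
    calc numRadius (adjoint A * A ^ 2 * adjoint A) ≤ ‖adjoint A * A ^ 2 * adjoint A‖ :=
          numRadius_le_norm _
      _ ≤ ‖adjoint A * A ^ 2‖ * ‖adjoint A‖ := norm_mul_le _ _
      _ ≤ (‖adjoint A‖ * ‖A ^ 2‖) * ‖adjoint A‖ := by
          gcongr
          exact norm_mul_le _ _
      _ ≤ (‖A‖ * (‖A‖ * ‖A‖)) * ‖A‖ := by
          rw [hadj, sq]
          gcongr
          exact norm_mul_le _ _
      _ = ‖A‖ ^ 4 := by ring
  have h6 : 0 ≤ numRadius (A ^ 2) := numRadius_nonneg _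
  have h7 : numRadius (A ^ 2) ≤ ‖A‖ ^ 2 := by
    calc numRadius (A ^ 2) ≤ ‖A ^ 2‖ := numRadius_le_norm _
      _ ≤ ‖A‖ * ‖A‖ := by rw [sq]; exact norm_mul_le _ _
      _ = ‖A‖ ^ 2 := (sq ‖A‖).symm
  nlinarith [sq_nonneg (‖A‖ ^ 2 - numRadius (A ^ 2)), norm_nonneg A]
end
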